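/- arXiv:2206.03315 — 3 statements merged into one kernel-verified Lean document; each statement's English description precedes it below -/
import Mathlib

section
/- If a permutation code C ⊆ S_n has minimum Hamming distance at least d, then for any two distinct codewords π, σ ∈ C, any subsets I, J ⊆ {1,...,n} of rows and columns with |I| + |J| = e, the matrices Y^π and Y^σ restricted to rows outside I and columns outside J have Hamming distance at least 2d − 2e. -/
/-- The permutation matrix of `π` (entry `(i, j)` is `1` iff `π j = i`). -/
def Ymat (n : ℕ) (π : Equiv.Perm (Fin n)) : Fin n × Fin n → Bool :=
  fun p => decide (π p.2 = p.1)

/-!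
Two permutation matrices differ exactly at the entries `(π j, j)` and `(σ j, j)` of the columns
`j` with `π j ≠ σ j`, so they are at Hamming distance `2 d(π, σ)`. Every row and every column
contains at most two of these entries, hence deleting `|I|` rows and `|J|` columns removes at
most `2 (|I| + |J|)` of them.
-/

open Finset

lemma card_le_card_filter_and_add {α : Type*} [DecidableEq α] (s : Finset α) (P Q : α → Prop)
    [DecidablePred P] [DecidablePred Q] :
    #s ≤ #(s.filter fun a => P a ∧ Q a) + #(s.filter fun a => ¬P a) +
      #(s.filter fun a => ¬Q a) := by
  rw [← card_filter_add_card_filter_not (fun a => P a ∧ Q a), add_assoc]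
  gcongr
  calc _ = #((s.filter fun a => ¬P a) ∪ s.filter fun a => ¬Q a) := by
          rw [← filter_or]; simp only [not_and_or]
    _ ≤ _ := card_union_le _ _

section

variable {n : ℕ} (π σ : Equiv.Perm (Fin n))

def ymatDiff : Finset (Fin n × Fin n) :=
  univ.filter fun p => Ymat n π p ≠ Ymat n σ p

lemma mem_ymatDiff_iff (i j : Fin n) :
    (i, j) ∈ ymatDiff π σ ↔ π j ≠ σ j ∧ (i = π j ∨ i = σ j) := by
  simp only [ymatDiff, Ymat, mem_filter, mem_univ, true_and, ne_eq, decide_eq_decide]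
  grind

lemma ymatDiff_eq_biUnion :
    ymatDiff π σ = (univ.filter fun j => π j ≠ σ j).biUnion fun j => {(π j, j), (σ j, j)} := by
  ext ⟨i, j⟩
  simp only [mem_ymatDiff_iff, mem_biUnion, mem_filter, mem_univ, true_and, mem_insert,
    mem_singleton, Prod.mk.injEq]
  constructor
  · rintro ⟨hj, hi⟩
    exact ⟨j, hj, by tauto⟩
  · rintro ⟨j, hj, ⟨rfl, rfl⟩ | ⟨rfl, rfl⟩⟩ <;> tauto

theorem card_ymatDiff : #(ymatDiff π σ) = 2 * hammingDist ⇑π ⇑σ := by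
  rw [ymatDiff_eq_biUnion, card_biUnion, sum_congr rfl fun j hj => card_pair ?_, sum_const,
    smul_eq_mul, mul_comm, hammingDist]
  · exact fun h => (mem_filter.1 hj).2 (Prod.ext_iff.1 h).1
  · intro j _ k _ hjk
    simp only [disjoint_left, mem_insert, mem_singleton]
    rintro _ (rfl | rfl) (h | h) <;> exact hjk (congrArg Prod.snd h)

lemma card_ymatDiff_filter_row_mem_le (I : Finset (Fin n)) :
    #((ymatDiff π σ).filter fun p => p.1 ∈ I) ≤ 2 * #I := by
  have hsub : (ymatDiff π σ).filter (fun p => p.1 ∈ I) ⊆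
      I.biUnion fun i => {(i, π.symm i), (i, σ.symm i)} := by
    rintro ⟨i, j⟩ hij
    obtain ⟨hdiff, hi⟩ := mem_filter.1 hij
    simp only [mem_biUnion, mem_insert, mem_singleton, Prod.mk.injEq]
    refine ⟨i, hi, ?_⟩
    rcases ((mem_ymatDiff_iff π σ i j).1 hdiff).2 with rfl | rfl
    · exact .inl ⟨rfl, (π.symm_apply_apply j).symm⟩
    · exact .inr ⟨rfl, (σ.symm_apply_apply j).symm⟩
  calc _ ≤ _ := card_le_card hsub
    _ ≤ #I * 2 := card_biUnion_le_card_mul _ _ _ fun _ _ => card_le_two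
    _ = 2 * #I := mul_comm _ _

lemma card_ymatDiff_filter_col_mem_le (J : Finset (Fin n)) :
    #((ymatDiff π σ).filter fun p => p.2 ∈ J) ≤ 2 * #J := by
  have hsub : (ymatDiff π σ).filter (fun p => p.2 ∈ J) ⊆
      J.biUnion fun j => {(π j, j), (σ j, j)} := by
    rintro ⟨i, j⟩ hij
    obtain ⟨hdiff, hj⟩ := mem_filter.1 hij
    simp only [mem_biUnion, mem_insert, mem_singleton, Prod.mk.injEq]
    exact ⟨j, hj, by simpa using ((mem_ymatDiff_iff π σ i j).1 hdiff).2⟩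
  calc _ ≤ _ := card_le_card hsub
    _ ≤ #J * 2 := card_biUnion_le_card_mul _ _ _ fun _ _ => card_le_two
    _ = 2 * #J := mul_comm _ _

end

/-- If a permutation code has minimum Hamming distance at least `d`, then for distinct
codewords `π, σ` and any deleted row set `I` and column set `J` with `|I| + |J| = e`,
the permutation matrices restricted to the remaining rows and columns are at Hamming
distance at least `2d - 2e`. -/
theorem stmt1 (n d e : ℕ) (C : Set (Equiv.Perm (Fin n)))
    (hC : ∀ π ∈ C, ∀ σ ∈ C, π ≠ σ → d ≤ hammingDist ⇑π ⇑σ)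
    (π σ : Equiv.Perm (Fin n)) (hπ : π ∈ C) (hσ : σ ∈ C) (hne : π ≠ σ)
    (I J : Finset (Fin n)) (he : I.card + J.card = e) :
    2 * d - 2 * e ≤
      (Finset.univ.filter (fun p : Fin n × Fin n =>
        p.1 ∉ I ∧ p.2 ∉ J ∧ Ymat n π p ≠ Ymat n σ p)).card := by
  have hkept : (Finset.univ.filter (fun p : Fin n × Fin n =>
      p.1 ∉ I ∧ p.2 ∉ J ∧ Ymat n π p ≠ Ymat n σ p)) =
      (ymatDiff π σ).filter fun p => p.1 ∉ I ∧ p.2 ∉ J := by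
    ext p
    simp only [ymatDiff, mem_filter, mem_univ, true_and]
    tauto
  have hdist := card_ymatDiff π σ ▸ Nat.mul_le_mul_left 2 (hC π hπ σ hσ hne)
  have hsplit := card_le_card_filter_and_add (ymatDiff π σ) (fun p => p.1 ∉ I) (fun p => p.2 ∉ J)
  simp only [not_not] at hsplit
  have hrows := card_ymatDiff_filter_row_mem_le π σ I
  have hcols := card_ymatDiff_filter_col_mem_le π σ J
  rw [hkept]
  omega
end

section
/- A permutation code C ⊆ S_n with minimum Hamming distance d can correct any pattern of e_1 background-noise bit flips, e_2 impulse-noise columns, and e_3 frequency-disturbance rows in the transmitted permutation matrix, provided e_1 + e_2 + e_3 ≤ d − 1: the codeword is uniquely determined by the corrupted matrix. -/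
/-- Corrupt a matrix `M`: flip the entries in `E` (background noise), set the rows in `R`
to all ones (permanent frequency disturbance) and the columns in `Cc` to all ones
(impulse noise). -/
def corrupt {n : ℕ} (M : Fin n × Fin n → Bool) (E : Finset (Fin n × Fin n))
    (R Cc : Finset (Fin n)) : Fin n × Fin n → Bool :=
  fun p => if p.1 ∈ R ∨ p.2 ∈ Cc then true else xor (M p) (decide (p ∈ E))

/-
Where `π` and `σ` differ in column `j`, the codeword matrices differ in the cells `(π j, j)` and
`(σ j, j)`. For the corrupted matrices to agree, the cell `(π j, j)` must lie in `E₁ ∪ E₂`, in a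
row of `R₂` or in a column of `C₂`; symmetrically `(σ j, j)` is covered by `E₁ ∪ E₂`, `R₁` or `C₁`.
These `2 d(π, σ)` cells are distinct and a row or column meets the graph of a permutation at most
once, so `2 d(π, σ) ≤ |E₁| + |E₂| + |R₁| + |R₂| + |C₁| + |C₂| ≤ 2 (d - 1) < 2 d(π, σ)`.
-/

open Finset

lemma mem_union_or_masked_of_corrupt_eq {n : ℕ} {M M' : Fin n × Fin n → Bool}
    {E₁ E₂ : Finset (Fin n × Fin n)} {R₁ R₂ C₁ C₂ : Finset (Fin n)} {p : Fin n × Fin n}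
    (h : corrupt M E₁ R₁ C₁ p = corrupt M' E₂ R₂ C₂ p) (hM : M p = true) (hM' : M' p = false) :
    p ∈ E₁ ∪ E₂ ∨ p.1 ∈ R₂ ∨ p.2 ∈ C₂ := by
  by_contra! hp
  simp_all [corrupt]

lemma card_graph_mem_add_card_graph_mem_le {ι β : Type*} [DecidableEq ι] [DecidableEq β]
    {f g : ι → β} {A : Finset ι} (hfg : ∀ j ∈ A, f j ≠ g j) (E : Finset (β × ι)) :
    #{j ∈ A | (f j, j) ∈ E} + #{j ∈ A | (g j, j) ∈ E} ≤ #E := by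
  have graph_injective (h : ι → β) : Function.Injective fun j => (h j, j) :=
    fun _ _ hij => congrArg Prod.snd hij
  have hdisj : Disjoint ({j ∈ A | (f j, j) ∈ E}.image fun j => (f j, j))
      ({j ∈ A | (g j, j) ∈ E}.image fun j => (g j, j)) := by
    simp only [disjoint_left, mem_image, mem_filter]
    rintro _ ⟨j, ⟨hj, -⟩, rfl⟩ ⟨_, -, hji⟩
    obtain ⟨hgf, rfl⟩ := Prod.ext_iff.1 hji
    exact hfg _ hj hgf.symm
  calc #{j ∈ A | (f j, j) ∈ E} + #{j ∈ A | (g j, j) ∈ E}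
      = #(({j ∈ A | (f j, j) ∈ E}.image fun j => (f j, j)) ∪
          ({j ∈ A | (g j, j) ∈ E}.image fun j => (g j, j))) := by
        rw [card_union_of_disjoint hdisj, card_image_of_injective _ (graph_injective f),
          card_image_of_injective _ (graph_injective g)]
    _ ≤ #E := card_le_card <| union_subset
        (image_subset_iff.2 fun _ hj => (mem_filter.1 hj).2)
        (image_subset_iff.2 fun _ hj => (mem_filter.1 hj).2)

lemma card_le_of_corrupt_eq {n : ℕ} {π σ : Equiv.Perm (Fin n)}
    {E₁ E₂ : Finset (Fin n × Fin n)} {R₁ R₂ C₁ C₂ : Finset (Fin n)}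
    (heq : corrupt (Ymat n π) E₁ R₁ C₁ = corrupt (Ymat n σ) E₂ R₂ C₂)
    {A : Finset (Fin n)} (hA : ∀ j ∈ A, π j ≠ σ j) :
    #A ≤ #{j ∈ A | (π j, j) ∈ E₁ ∪ E₂} + #R₂ + #C₂ := by
  have hcover : ∀ j ∈ A, (π j, j) ∈ E₁ ∪ E₂ ∨ π j ∈ R₂ ∨ j ∈ C₂ := fun j hj =>
    mem_union_or_masked_of_corrupt_eq (congrFun heq (π j, j)) (by simp [Ymat])
      (by simpa [Ymat] using (hA j hj).symm)
  calc #A = #{j ∈ A | (π j, j) ∈ E₁ ∪ E₂ ∨ π j ∈ R₂ ∨ j ∈ C₂} := by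
        rw [filter_true_of_mem hcover]
    _ ≤ #{j ∈ A | (π j, j) ∈ E₁ ∪ E₂} + (#{j ∈ A | π j ∈ R₂} + #(A ∩ C₂)) := by
        rw [filter_or, filter_or, filter_mem_eq_inter]
        exact (card_union_le _ _).trans (Nat.add_le_add_left (card_union_le _ _) _)
    _ ≤ #{j ∈ A | (π j, j) ∈ E₁ ∪ E₂} + (#R₂ + #C₂) :=
        Nat.add_le_add_left (Nat.add_le_add
          (card_le_card_of_injOn π (fun j hj => (mem_filter.1 hj).2) π.injective.injOn)
          (card_le_card inter_subset_right)) _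
    _ = _ := (add_assoc _ _ _).symm

/-- A permutation code of minimum Hamming distance `d` corrects any combination of `e₁`
background-noise flips, `e₂` impulse-noise columns and `e₃` frequency-disturbance rows
with `e₁ + e₂ + e₃ ≤ d - 1`: two distinct codewords can never produce the same corrupted
matrix under noise patterns within this budget. -/
theorem stmt10 (n d : ℕ) (C : Set (Equiv.Perm (Fin n)))
    (hC : ∀ π ∈ C, ∀ σ ∈ C, π ≠ σ → d ≤ hammingDist ⇑π ⇑σ)
    (π σ : Equiv.Perm (Fin n)) (hπ : π ∈ C) (hσ : σ ∈ C) (hne : π ≠ σ)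
    (E₁ E₂ : Finset (Fin n × Fin n)) (C₁ C₂ R₁ R₂ : Finset (Fin n))
    (h1 : E₁.card + C₁.card + R₁.card ≤ d - 1)
    (h2 : E₂.card + C₂.card + R₂.card ≤ d - 1) :
    corrupt (Ymat n π) E₁ R₁ C₁ ≠ corrupt (Ymat n σ) E₂ R₂ C₂ := by
  intro heq
  set A : Finset (Fin n) := {j | π j ≠ σ j}
  have hA : ∀ j ∈ A, π j ≠ σ j := fun j hj => (mem_filter.1 hj).2
  have hd : d ≤ #A := hC π hπ σ hσ hne
  -- `d - 1` truncates at `d = 0`, so the distance must be shown positive separately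
  have hA_pos : 0 < #A := hammingDist_pos.2 (DFunLike.coe_injective.ne hne)
  have hπ_cover := card_le_of_corrupt_eq heq hA
  have hσ_cover := card_le_of_corrupt_eq heq.symm fun j hj => (hA j hj).symm
  rw [union_comm] at hσ_cover
  have hE := card_graph_mem_add_card_graph_mem_le hA (E₁ ∪ E₂)
  have hE_union := card_union_le E₁ E₂
  omega
end

section
/- The code C_n^e of even permutations in the Tenengolts code C_n has minimum Hamming distance at least 3 (for |C_n^e| ≥ 2). -/
/-
Two permutations π, σ differ exactly on the support of π⁻¹σ. A nontrivial permutation moves at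
least two points, and one that moves exactly two is a transposition, in which case π and σ
have opposite signs.
-/

/-- The descent-indicator vector of a permutation `π` of `{1, …, n}`:
`α(π)_i = 1` iff the entry at position `i + 1` is at least the entry at position `i`. -/
def alphaVec {n : ℕ} (π : Equiv.Perm (Fin n)) : Fin (n - 1) → Bool :=
  fun i => decide (π ⟨i.val, by have := i.isLt; omega⟩ ≤ π ⟨i.val + 1, by have := i.isLt; omega⟩)

/-- The Tenengolts checksum `Σ_{i=1}^{n-1} i · α(π)_i` of a permutation `π`. -/
def tSum {n : ℕ} (π : Equiv.Perm (Fin n)) : ℕ :=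
  ∑ i : Fin (n - 1), (i.val + 1) * (if alphaVec π i then 1 else 0)

namespace Equiv.Perm

variable {α : Type*} [Fintype α] [DecidableEq α]

theorem hammingDist_eq_card_support (π σ : Perm α) :
    hammingDist ⇑π ⇑σ = (π⁻¹ * σ).support.card := by
  unfold hammingDist
  congr 1
  ext x
  simp only [Finset.mem_filter, Finset.mem_univ, true_and, mem_support, mul_apply, ne_eq,
    inv_eq_iff_eq]
  exact not_congr eq_comm

theorem two_le_hammingDist_of_ne {π σ : Perm α} (h : π ≠ σ) : 2 ≤ hammingDist ⇑π ⇑σ := by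
  rw [hammingDist_eq_card_support]
  exact one_lt_card_support_of_ne_one (by rwa [Ne, inv_mul_eq_one])

theorem sign_ne_of_hammingDist_eq_two {π σ : Perm α} (h : hammingDist ⇑π ⇑σ = 2) :
    sign π ≠ sign σ := by
  rw [hammingDist_eq_card_support, card_support_eq_two] at h
  intro hsign
  have hswap := h.sign_eq
  rw [sign_mul, sign_inv, hsign, Int.units_mul_self] at hswap
  exact absurd hswap (by decide)

end Equiv.Perm

theorem stmt12_general (n : ℕ) (π σ : Equiv.Perm (Fin n))
    (hπe : Equiv.Perm.sign π = 1) (hσe : Equiv.Perm.sign σ = 1) (hne : π ≠ σ) :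
    3 ≤ hammingDist ⇑π ⇑σ := by
  by_contra hlt
  have htwo : hammingDist ⇑π ⇑σ = 2 := by
    have := Equiv.Perm.two_le_hammingDist_of_ne hne
    omega
  exact Equiv.Perm.sign_ne_of_hammingDist_eq_two htwo (hπe.trans hσe.symm)

/-- The code `C_n^e` of even permutations in the Tenengolts code `C_n` has minimum Hamming
distance at least 3. -/
theorem stmt12 (n : ℕ) (π σ : Equiv.Perm (Fin n))
    (hπ : tSum π % n = 0) (hσ : tSum σ % n = 0)
    (hπe : Equiv.Perm.sign π = 1) (hσe : Equiv.Perm.sign σ = 1) (hne : π ≠ σ) :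
    3 ≤ hammingDist ⇑π ⇑σ :=
  stmt12_general n π σ hπe hσe hne
end
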